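/- arXiv:1604.07101 — 2 statements merged into one kernel-verified Lean document; each statement's English description precedes it below -/
import Mathlib

section
/- Let (X_k)_{k≥1} be an i.i.d. sequence of random variables taking values in [0,1] with common mean p, and let S_s = X_1 + ⋯ + X_s. For any α > 1/2 and any integer t ≥ 2, the probability that there exists s ∈ {1, …, t} with S_s/s − √(α·log t / s) ≥ p is at most (log t / log(α + 1/2) + 1) · t^{−2α/(α+1/2)}. (This is the anytime lower-confidence-bound deviation inequality, Eq. (15) of Lemma 6, proved by a peeling argument together with Hoeffding's inequality.) -/
/-!
Peeling. Put `β = α + 1/2` and cut `{1, …, t}` into the blocks `β ^ j ≤ s ≤ β ^ (j + 1)`,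
`j ≤ log_β t`. On block `j`, the LCB reaching `p` forces `S_s - s p ≥ √(α β ^ j log t)`.
Doob's maximal inequality for the submartingale `exp (λ (S_s - s p))`, with Hoeffding's lemma
bounding its mean, shows that this happens for some `s ≤ β ^ (j + 1)` with probability at most
`exp (-2 α β ^ j log t / β ^ (j + 1)) = t ^ (-2α/β)`. A union bound over the blocks concludes.
-/

open MeasureTheory ProbabilityTheory Real Finset
open scoped NNReal

section MaximalHoeffding

variable {Ω : Type*} {mΩ : MeasurableSpace Ω} {μ : Measure Ω} [IsProbabilityMeasure μ]
  {Y : ℕ → Ω → ℝ} {c : ℝ≥0}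

lemma one_le_mgf_of_integral_eq_zero {Z : Ω → ℝ} (hZ : Integrable Z μ) (h0 : μ[Z] = 0)
    {l : ℝ} (hexp : Integrable (fun ω ↦ exp (l * Z ω)) μ) : 1 ≤ mgf Z μ l :=
  calc (1 : ℝ) = ∫ ω, (1 + l * Z ω) ∂μ := by
        rw [integral_add (integrable_const 1) (hZ.const_mul l), integral_const_mul, h0]
        simp
    _ ≤ mgf Z μ l :=
        integral_mono ((integrable_const 1).add (hZ.const_mul l)) hexp
          fun ω ↦ by linarith [add_one_le_exp (l * Z ω)]

lemma submartingale_exp_mul_sum_Icc (hmeas : ∀ k, Measurable (Y k)) (hindep : iIndepFun Y μ)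
    (hY : ∀ k, HasSubgaussianMGF (Y k) c μ) (hzero : ∀ k, μ[Y k] = 0) (l : ℝ) :
    Submartingale (fun s ω ↦ exp (l * ∑ k ∈ Icc 1 s, Y k ω))
      (Filtration.natural Y fun k ↦ (hmeas k).stronglyMeasurable) μ := by
  set ℱ := Filtration.natural Y fun k ↦ (hmeas k).stronglyMeasurable
  set f : ℕ → Ω → ℝ := fun s ω ↦ exp (l * ∑ k ∈ Icc 1 s, Y k ω)
  have hadapted : StronglyAdapted ℱ f := fun s ↦ by
    have hY_adapted := Filtration.stronglyAdapted_natural fun k ↦ (hmeas k).stronglyMeasurable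
    refine (Measurable.exp (Measurable.const_mul ?_ l)).stronglyMeasurable
    exact Finset.measurable_sum _ fun k hk ↦
      (hY_adapted k).measurable.mono (ℱ.mono (mem_Icc.1 hk).2) le_rfl
  have hint : ∀ s, Integrable (f s) μ := fun s ↦
    (HasSubgaussianMGF.sum_of_iIndepFun hindep fun k _ ↦ hY k).integrable_exp_mul l
  refine submartingale_nat hadapted hint fun i ↦ ?_
  set g : Ω → ℝ := fun ω ↦ exp (l * Y (i + 1) ω)
  have hfg : f (i + 1) = f i * g := by
    funext ω
    simp only [f, g, Pi.mul_apply, ← exp_add, sum_Icc_succ_top (Nat.le_add_left 1 i)]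
    ring_nf
  have hg_meas : StronglyMeasurable[.comap (Y (i + 1)) inferInstance] g :=
    (Measurable.exp ((comap_measurable (Y (i + 1))).const_mul l)).stronglyMeasurable
  have hindep_past : Indep (.comap (Y (i + 1)) inferInstance) (ℱ i) μ := by
    have hdisj : Disjoint ({i + 1} : Set ℕ) (Set.Iic i) := by simp
    have h := indep_iSup_of_disjoint (fun k ↦ (hmeas k).comap_le) hindep.iIndep hdisj
    rw [_root_.iSup_singleton] at h
    exact h
  have hcond_f : μ[f (i + 1) | ℱ i] =ᵐ[μ] f i * μ[g | ℱ i] := by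
    rw [hfg]
    exact condExp_mul_of_stronglyMeasurable_left (hadapted i) (hfg ▸ hint (i + 1))
      ((hY (i + 1)).integrable_exp_mul l)
  have hcond_g : μ[g | ℱ i] =ᵐ[μ] fun _ ↦ mgf (Y (i + 1)) μ l :=
    condExp_indep_eq (hmeas (i + 1)).comap_le (ℱ.le i) hg_meas hindep_past
  have hmgf : 1 ≤ mgf (Y (i + 1)) μ l :=
    one_le_mgf_of_integral_eq_zero (hY (i + 1)).integrable (hzero (i + 1))
      ((hY (i + 1)).integrable_exp_mul l)
  filter_upwards [hcond_f, hcond_g] with ω hf hg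
  rw [hf, Pi.mul_apply, hg]
  exact le_mul_of_one_le_right (exp_pos _).le hmgf

lemma measure_exists_sum_Icc_ge_le_exp_mul (hmeas : ∀ k, Measurable (Y k))
    (hindep : iIndepFun Y μ) (hY : ∀ k, HasSubgaussianMGF (Y k) c μ)
    (hzero : ∀ k, μ[Y k] = 0)
    (n : ℕ) (x : ℝ) {l : ℝ} (hl : 0 ≤ l) :
    μ {ω | ∃ s ∈ Icc 1 n, x ≤ ∑ k ∈ Icc 1 s, Y k ω}
      ≤ ENNReal.ofReal (exp (-(l * x) + n * c * l ^ 2 / 2)) := by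
  set f : ℕ → Ω → ℝ := fun s ω ↦ exp (l * ∑ k ∈ Icc 1 s, Y k ω)
  set ε : ℝ≥0 := (exp (l * x)).toNNReal
  have hε : (ε : ℝ) = exp (l * x) := coe_toNNReal _ (exp_pos _).le
  set A := {ω | (ε : ℝ) ≤ (range (n + 1)).sup' nonempty_range_add_one fun k ↦ f k ω}
  have hsubset : {ω | ∃ s ∈ Icc 1 n, x ≤ ∑ k ∈ Icc 1 s, Y k ω} ⊆ A := by
    rintro ω ⟨s, hs, hx⟩
    have hs_range : s ∈ range (n + 1) := mem_range.2 (Nat.lt_succ_of_le (mem_Icc.1 hs).2)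
    refine le_trans ?_ (le_sup' (fun k ↦ f k ω) hs_range)
    rw [hε]
    exact exp_le_exp.2 (mul_le_mul_of_nonneg_left hx hl)
  have hdoob := maximal_ineq (submartingale_exp_mul_sum_Icc hmeas hindep hY hzero l)
    (fun s ω ↦ (exp_pos _).le) (ε := ε) n
  have hmgf : ∫ ω, f n ω ∂μ ≤ exp (n * c * l ^ 2 / 2) := by
    have := (HasSubgaussianMGF.sum_of_iIndepFun hindep (s := Icc 1 n) fun k _ ↦ hY k).mgf_le l
    simpa [mgf] using this
  have hint_le : ∫ ω in A, f n ω ∂μ ≤ ∫ ω, f n ω ∂μ :=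
    setIntegral_le_integral ((submartingale_exp_mul_sum_Icc hmeas hindep hY hzero l).integrable n)
      (ae_of_all _ fun ω ↦ (exp_pos _).le)
  calc μ {ω | ∃ s ∈ Icc 1 n, x ≤ ∑ k ∈ Icc 1 s, Y k ω}
      ≤ μ A := measure_mono hsubset
    _ ≤ ENNReal.ofReal (exp (n * c * l ^ 2 / 2)) / ε := by
        rw [ENNReal.le_div_iff_mul_le (by simp [ε, exp_pos]) (by simp), mul_comm]
        exact hdoob.trans (ENNReal.ofReal_le_ofReal (hint_le.trans hmgf))
    _ = ENNReal.ofReal (exp (-(l * x) + n * c * l ^ 2 / 2)) := by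
        rw [show (ε : ENNReal) = ENNReal.ofReal (exp (l * x)) from rfl,
          ← ENNReal.ofReal_div_of_pos (exp_pos _), ← exp_sub]
        ring_nf

lemma measure_exists_sum_Icc_ge_le (hmeas : ∀ k, Measurable (Y k))
    (hindep : iIndepFun Y μ) (hY : ∀ k, HasSubgaussianMGF (Y k) c μ)
    (hzero : ∀ k, μ[Y k] = 0)
    (n : ℕ) {x : ℝ} (hx : 0 ≤ x) :
    μ {ω | ∃ s ∈ Icc 1 n, x ≤ ∑ k ∈ Icc 1 s, Y k ω}
      ≤ ENNReal.ofReal (exp (-x ^ 2 / (2 * (n * c)))) := by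
  rcases (show (0 : ℝ) ≤ n * c by positivity).eq_or_lt with hnc | hnc
  · rw [← hnc, mul_zero, div_zero, exp_zero, ENNReal.ofReal_one]
    exact prob_le_one
  convert measure_exists_sum_Icc_ge_le_exp_mul hmeas hindep hY hzero n x
    (div_nonneg hx hnc.le : 0 ≤ x / (n * c)) using 3
  field_simp
  ring

lemma measure_exists_sum_Icc_sub_ge_le {X : ℕ → Ω → ℝ} {p : ℝ}
    (hmeas : ∀ k, Measurable (X k)) (hindep : iIndepFun X μ)
    (hrange : ∀ k ω, X k ω ∈ Set.Icc (0 : ℝ) 1)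
    (hmean : ∀ k, μ[X k] = p) (n : ℕ) {x : ℝ} (hx : 0 ≤ x) :
    μ {ω | ∃ s ∈ Icc 1 n, x ≤ ∑ k ∈ Icc 1 s, (X k ω - p)}
      ≤ ENNReal.ofReal (exp (-2 * x ^ 2 / n)) := by
  have hY : ∀ k, HasSubgaussianMGF (fun ω ↦ X k ω - p) (1 / 4) μ := fun k ↦ by
    have h := hasSubgaussianMGF_of_mem_Icc (hmeas k).aemeasurable (ae_of_all μ (hrange k))
    rw [hmean k] at h
    convert h
    norm_num [← NNReal.coe_inj]
  have hzero : ∀ k, μ[fun ω ↦ X k ω - p] = 0 := fun k ↦ by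
    rw [integral_sub (Integrable.of_mem_Icc 0 1 (hmeas k).aemeasurable (ae_of_all μ (hrange k)))
      (integrable_const p), hmean k]
    simp
  convert measure_exists_sum_Icc_ge_le (fun k ↦ (hmeas k).sub_const p)
    (hindep.comp _ fun _ ↦ measurable_id.sub_const p) hY hzero n hx using 3
  push_cast
  ring

end MaximalHoeffding

lemma exists_pow_le_le_floor_pow_succ {β : ℝ} (hβ : 1 < β) {s t : ℕ} (hs : 1 ≤ s)
    (hst : s ≤ t) :
    ∃ j ≤ ⌊logb β t⌋₊, β ^ j ≤ s ∧ s ≤ ⌊β ^ (j + 1)⌋₊ := by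
  obtain ⟨j, hjs, hsj⟩ := exists_nat_pow_near (Nat.one_le_cast.2 hs) hβ
  refine ⟨j, Nat.le_floor ?_, hjs, Nat.le_floor hsj.le⟩
  rw [le_logb_iff_rpow_le hβ (by norm_cast; omega), rpow_natCast]
  exact hjs.trans (Nat.cast_le.2 hst)

lemma sqrt_mul_le_sub_mul_of_le_div_sub_sqrt {S p a s : ℝ} (hs : 0 < s)
    (h : p ≤ S / s - √(a / s)) : √(a * s) ≤ S - s * p := by
  have hsqrt : √(a * s) = s * √(a / s) := by
    rw [mul_comm s, ← sqrt_sq hs.le, ← sqrt_mul' _ (sq_nonneg s), sqrt_sq hs.le]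
    field_simp
  rw [le_sub_iff_add_le, le_div_iff₀ hs] at h
  linarith

lemma exp_neg_two_mul_div_le_of_le_pow_succ {α β L : ℝ} (hα : 0 ≤ α) (hβ : 0 < β)
    (hL : 0 ≤ L) {n : ℝ} (hn : 0 < n) {j : ℕ} (hnj : n ≤ β ^ (j + 1)) :
    exp (-2 * (α * β ^ j * L) / n) ≤ exp (-(2 * α) / β * L) := by
  refine exp_le_exp.2 ?_
  calc -2 * (α * β ^ j * L) / n ≤ -2 * (α * β ^ j * L) / β ^ (j + 1) := by
        rw [neg_mul, neg_div, neg_div, neg_le_neg_iff]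
        exact div_le_div_of_nonneg_left (by positivity) hn hnj
    _ = -(2 * α) / β * L := by
        field_simp
        ring

lemma sum_range_floor_add_one_ofReal_le {L T : ℝ} (hL : 0 ≤ L) (hT : 0 ≤ T) :
    ∑ _j ∈ range (⌊L⌋₊ + 1), ENNReal.ofReal T ≤ ENNReal.ofReal ((L + 1) * T) := by
  rw [sum_const, card_range, nsmul_eq_mul, ← ENNReal.ofReal_natCast,
    ← ENNReal.ofReal_mul (by positivity)]
  refine ENNReal.ofReal_le_ofReal (mul_le_mul_of_nonneg_right ?_ hT)
  push_cast
  exact add_le_add_left (Nat.floor_le hL) 1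

theorem stmt_2_general {Ω : Type*} [MeasurableSpace Ω] (μ : Measure Ω) [IsProbabilityMeasure μ]
    (X : ℕ → Ω → ℝ) (p : ℝ)
    (hmeas : ∀ k, Measurable (X k))
    (hindep : iIndepFun X μ)
    (hrange : ∀ k ω, X k ω ∈ Set.Icc (0 : ℝ) 1)
    (hmean : ∀ k, ∫ ω, X k ω ∂μ = p)
    (α : ℝ) (hα : 1/2 < α) (t : ℕ) :
    μ {ω | ∃ s ∈ Finset.Icc 1 t,
        (∑ k ∈ Finset.Icc 1 s, X k ω) / (s : ℝ)
          - Real.sqrt (α * Real.log t / (s : ℝ)) ≥ p}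
      ≤ ENNReal.ofReal
          ((Real.log t / Real.log (α + 1/2) + 1) * (t : ℝ) ^ (-(2 * α) / (α + 1/2))) := by
  rcases Nat.eq_zero_or_pos t with rfl | ht
  · simp
  set β := α + 1 / 2 with hβ_def
  have hβ : 1 < β := by linarith
  have hlogt : 0 ≤ log t := log_natCast_nonneg t
  set E : ℕ → Set Ω := fun j ↦ {ω | ∃ s ∈ Icc 1 ⌊β ^ (j + 1)⌋₊,
    √(α * β ^ j * log t) ≤ ∑ k ∈ Icc 1 s, (X k ω - p)}
  have hE : ∀ j, μ (E j) ≤ ENNReal.ofReal ((t : ℝ) ^ (-(2 * α) / β)) := fun j ↦ by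
    refine (measure_exists_sum_Icc_sub_ge_le hmeas hindep hrange hmean _ (sqrt_nonneg _)).trans
      (ENNReal.ofReal_le_ofReal ?_)
    rw [sq_sqrt (by positivity), rpow_def_of_pos (by positivity), mul_comm (log t)]
    have hfloor : 0 < ⌊β ^ (j + 1)⌋₊ := Nat.le_floor (by simpa using one_le_pow₀ hβ.le)
    exact exp_neg_two_mul_div_le_of_le_pow_succ (by linarith) (by linarith) hlogt
      (Nat.cast_pos.2 hfloor) (Nat.floor_le (by positivity))
  have hsubset : {ω | ∃ s ∈ Icc 1 t, (∑ k ∈ Icc 1 s, X k ω) / (s : ℝ)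
      - √(α * log t / (s : ℝ)) ≥ p} ⊆ ⋃ j ∈ range (⌊logb β t⌋₊ + 1), E j := by
    rintro ω ⟨s, hs, hlcb⟩
    obtain ⟨hs1, hst⟩ := mem_Icc.1 hs
    obtain ⟨j, hj, hβs, hsβ⟩ := exists_pow_le_le_floor_pow_succ hβ hs1 hst
    refine Set.mem_biUnion (mem_range.2 (Nat.lt_succ_of_le hj))
      ⟨s, mem_Icc.2 ⟨hs1, hsβ⟩, ?_⟩
    calc √(α * β ^ j * log t) ≤ √(α * log t * s) :=
          sqrt_le_sqrt (by nlinarith [mul_nonneg (by linarith : (0:ℝ) ≤ α) hlogt])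
      _ ≤ (∑ k ∈ Icc 1 s, X k ω) - s * p :=
          sqrt_mul_le_sub_mul_of_le_div_sub_sqrt (by exact_mod_cast hs1) hlcb
      _ = ∑ k ∈ Icc 1 s, (X k ω - p) := by simp [sum_sub_distrib]
  calc _ ≤ ∑ j ∈ range (⌊logb β t⌋₊ + 1), μ (E j) :=
        (measure_mono hsubset).trans (measure_biUnion_finset_le _ _)
    _ ≤ ∑ j ∈ range (⌊logb β t⌋₊ + 1), ENNReal.ofReal ((t : ℝ) ^ (-(2 * α) / β)) :=
        sum_le_sum fun j _ ↦ hE j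
    _ ≤ _ :=
        sum_range_floor_add_one_ofReal_le (div_nonneg hlogt (log_nonneg hβ.le)) (by positivity)

/-- Anytime lower-confidence-bound deviation inequality (Eq. (15) of Lemma 6):
for an i.i.d. sequence of `[0,1]`-valued random variables with mean `p`, the
probability that the LCB `S_s/s - √(α log t / s)` falls at or above `p` for some
`s ∈ {1,…,t}` is at most `(log t / log(α+1/2) + 1) · t^{−2α/(α+1/2)}`. -/
theorem stmt_2 {Ω : Type*} [MeasurableSpace Ω] (μ : Measure Ω) [IsProbabilityMeasure μ]
    (X : ℕ → Ω → ℝ) (p : ℝ)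
    (hmeas : ∀ k, Measurable (X k))
    (hindep : iIndepFun X μ)
    (hident : ∀ k, IdentDistrib (X k) (X 1) μ μ)
    (hrange : ∀ k ω, X k ω ∈ Set.Icc (0 : ℝ) 1)
    (hmean : ∀ k, ∫ ω, X k ω ∂μ = p)
    (α : ℝ) (hα : 1/2 < α) (t : ℕ) (ht : 2 ≤ t) :
    μ {ω | ∃ s ∈ Finset.Icc 1 t,
        (∑ k ∈ Finset.Icc 1 s, X k ω) / (s : ℝ)
          - Real.sqrt (α * Real.log t / (s : ℝ)) ≥ p}
      ≤ ENNReal.ofReal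
          ((Real.log t / Real.log (α + 1/2) + 1) * (t : ℝ) ^ (-(2 * α) / (α + 1/2))) :=
  stmt_2_general μ X p hmeas hindep hrange hmean α hα t
end

section
/- Let (X_k)_{k≥1} be an i.i.d. sequence of random variables taking values in [0,1] with common mean p > 1/2, let Δ = p − 1/2, let S_s = X_1 + ⋯ + X_s, and let α > 1/2. For any integer t ≥ 2, the probability that there exists an integer s with 4α·log t / Δ² ≤ s ≤ t and S_s/s − √(α·log t / s) ≤ 1/2 is at most (log t / log(α + 1/2) + 1) · t^{−2α/(α+1/2)}. (This combines the deterministic implication in the proof of Lemma 2 — if s ≥ 4α log t/Δ² then the lower confidence bound being at most 1/2 forces the upper confidence bound S_s/s + √(α log t/s) to be at most p — with the anytime UCB deviation inequality of Lemma 6.) -/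
/-!
For `s ≥ 4α log t / Δ²` the confidence radius `√(α log t / s)` is at most `Δ / 2`, so a lower
confidence bound below `1/2 = p - Δ` forces the upper confidence bound below `p`, that is
`∑_{k ≤ s} (p - X_k) ≥ √(α log t · s)`. By Hoeffding's lemma the increments `p - X_k` are
`1/4`-sub-Gaussian, so `exp (λ ∑_{k ≤ s} (p - X_k))` is a submartingale and Doob's maximal
inequality bounds the probability that the centred sums reach `x` before time `m` by
`exp (-2x² / m)`. Peeling `s` into geometric blocks `[β^k, β^(k+1))` with `β = α + 1/2`, each
block costs `exp (-2α log t / β) = t^(-2α/β)`, and at most `log t / log β + 1` blocks meet `[1, t]`.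
-/

open MeasureTheory ProbabilityTheory Real Finset
open scoped NNReal

section

variable {Ω : Type*} [MeasurableSpace Ω] {μ : Measure Ω} [IsProbabilityMeasure μ]
  {Y : ℕ → Ω → ℝ} {c : ℝ≥0}

lemma ProbabilityTheory.HasSubgaussianMGF.one_le_mgf {Z : Ω → ℝ} (h : HasSubgaussianMGF Z c μ)
    (h0 : μ[Z] = 0) (t : ℝ) : 1 ≤ mgf Z μ t :=
  calc 1 = ∫ ω, (1 + t * Z ω) ∂μ := by
        rw [integral_add (integrable_const 1) (h.integrable.const_mul t), integral_const_mul, h0]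
        simp
    _ ≤ mgf Z μ t := integral_mono ((integrable_const 1).add (h.integrable.const_mul t))
        (h.integrable_exp_mul t) fun ω => by linarith [add_one_le_exp (t * Z ω)]

lemma submartingale_exp_mul_sum (hmeas : ∀ k, Measurable (Y k))
    (hindep : iIndepFun Y μ) (hsubG : ∀ k, HasSubgaussianMGF (Y k) c μ) (h0 : ∀ k, μ[Y k] = 0)
    (t : ℝ) :
    Submartingale (fun n ω => exp (t * ∑ k ∈ Icc 1 n, Y k ω))
      (Filtration.natural Y fun k => (hmeas k).stronglyMeasurable) μ := by
  set ℱ := Filtration.natural Y fun k => (hmeas k).stronglyMeasurable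
  have hadapted : StronglyAdapted ℱ fun n ω => exp (t * ∑ k ∈ Icc 1 n, Y k ω) := by
    intro n
    have hsum : StronglyMeasurable[ℱ n] fun ω => ∑ k ∈ Icc 1 n, Y k ω :=
      Finset.stronglyMeasurable_fun_sum _ fun k hk =>
        (Filtration.stronglyAdapted_natural _ k).mono (ℱ.mono (mem_Icc.1 hk).2)
    exact (continuous_exp.comp (continuous_const.mul continuous_id)).comp_stronglyMeasurable hsum
  have hint : ∀ n, Integrable (fun ω => exp (t * ∑ k ∈ Icc 1 n, Y k ω)) μ := fun n =>
    (HasSubgaussianMGF.sum_of_iIndepFun hindep fun k _ => hsubG k).integrable_exp_mul t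
  refine submartingale_of_setIntegral_le_succ hadapted hint fun n A hA => ?_
  have hstep : ∀ ω, exp (t * ∑ k ∈ Icc 1 (n + 1), Y k ω)
      = exp (t * ∑ k ∈ Icc 1 n, Y k ω) * exp (t * Y (n + 1) ω) := fun ω => by
    rw [sum_Icc_succ_top (Nat.le_add_left 1 n), mul_add, exp_add]
  -- Sums start at index 1, so `Y (n + 1)` is independent of the natural filtration at time `n`.
  have hindepA : IndepFun (A.indicator fun ω => exp (t * ∑ k ∈ Icc 1 n, Y k ω))
      (fun ω => exp (t * Y (n + 1) ω)) μ := by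
    rw [IndepFun_iff_Indep]
    refine indep_of_indep_of_le
      (hindep.indep_comap_natural_of_lt (fun k => (hmeas k).stronglyMeasurable) n.lt_succ_self).symm
      ?_ ?_
    · exact ((hadapted n).measurable.indicator hA).comap_le
    · exact ((comap_measurable (Y (n + 1))).const_mul t).exp.comap_le
  calc ∫ ω in A, exp (t * ∑ k ∈ Icc 1 n, Y k ω) ∂μ
      = (∫ ω in A, exp (t * ∑ k ∈ Icc 1 n, Y k ω) ∂μ) * 1 := (mul_one _).symm
    _ ≤ (∫ ω in A, exp (t * ∑ k ∈ Icc 1 n, Y k ω) ∂μ) * mgf (Y (n + 1)) μ t :=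
        mul_le_mul_of_nonneg_left ((hsubG _).one_le_mgf (h0 _) t)
          (setIntegral_nonneg (ℱ.le n A hA) fun ω _ => (exp_pos _).le)
    _ = ∫ ω in A, exp (t * ∑ k ∈ Icc 1 (n + 1), Y k ω) ∂μ := by
        simp_rw [hstep]
        rw [← integral_indicator (ℱ.le n A hA), ← integral_indicator (ℱ.le n A hA)]
        simp_rw [Set.indicator_mul_left]
        exact (hindepA.integral_fun_mul_eq_mul_integral
          (((hadapted n).measurable.indicator hA).mono (ℱ.le n) le_rfl).aestronglyMeasurable
          ((hsubG _).integrable_exp_mul t).aestronglyMeasurable).symm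

lemma measureReal_exists_sum_ge_le_exp_add (hmeas : ∀ k, Measurable (Y k))
    (hindep : iIndepFun Y μ)
    (hsubG : ∀ k, HasSubgaussianMGF (Y k) c μ) (h0 : ∀ k, μ[Y k] = 0) (n : ℕ) (x : ℝ)
    {t : ℝ} (ht : 0 ≤ t) :
    μ.real {ω | ∃ s ≤ n, x ≤ ∑ k ∈ Icc 1 s, Y k ω} ≤ exp (-t * x + n * c * t ^ 2 / 2) := by
  set f : ℕ → Ω → ℝ := fun n ω => exp (t * ∑ k ∈ Icc 1 n, Y k ω)
  set ε : ℝ≥0 := ⟨exp (t * x), (exp_pos _).le⟩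
  set S := {ω | (ε : ℝ) ≤ (range (n + 1)).sup' nonempty_range_add_one fun k => f k ω}
  have hsub : {ω | ∃ s ≤ n, x ≤ ∑ k ∈ Icc 1 s, Y k ω} ⊆ S := by
    rintro ω ⟨s, hsn, hxs⟩
    exact le_sup'_of_le (fun k => f k ω) (mem_range_succ_iff.2 hsn)
      (exp_le_exp.2 (mul_le_mul_of_nonneg_left hxs ht))
  have hdoob : exp (t * x) * μ.real S ≤ ∫ ω in S, f n ω ∂μ := by
    have h := maximal_ineq (submartingale_exp_mul_sum hmeas hindep hsubG h0 t)
      (fun _ _ => (exp_pos _).le) (ε := ε) n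
    have h' := ENNReal.toReal_mono ENNReal.ofReal_ne_top h
    rwa [ENNReal.toReal_mul, ENNReal.coe_toReal, ENNReal.toReal_ofReal
      (setIntegral_nonneg_of_ae (ae_of_all _ fun ω => (exp_pos _).le))] at h'
  have hmgf : ∫ ω in S, f n ω ∂μ ≤ exp (n * c * t ^ 2 / 2) := by
    have hsum := HasSubgaussianMGF.sum_of_iIndepFun hindep (s := Icc 1 n) fun k _ => hsubG k
    calc ∫ ω in S, f n ω ∂μ ≤ mgf (fun ω => ∑ k ∈ Icc 1 n, Y k ω) μ t :=
          setIntegral_le_integral (hsum.integrable_exp_mul t)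
            (ae_of_all _ fun ω => (exp_pos _).le)
      _ ≤ exp (n * c * t ^ 2 / 2) := by
          simpa [Nat.card_Icc] using hsum.mgf_le t
  calc μ.real {ω | ∃ s ≤ n, x ≤ ∑ k ∈ Icc 1 s, Y k ω} ≤ μ.real S := measureReal_mono hsub
    _ = exp (-t * x) * (exp (t * x) * μ.real S) := by
        rw [← mul_assoc, ← exp_add]; simp
    _ ≤ exp (-t * x) * exp (n * c * t ^ 2 / 2) := by gcongr; exact hdoob.trans hmgf
    _ = exp (-t * x + n * c * t ^ 2 / 2) := (exp_add _ _).symm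

lemma measureReal_exists_sum_ge_le (hmeas : ∀ k, Measurable (Y k)) (hindep : iIndepFun Y μ)
    (hsubG : ∀ k, HasSubgaussianMGF (Y k) c μ) (h0 : ∀ k, μ[Y k] = 0) (n : ℕ) {x : ℝ}
    (hx : 0 ≤ x) :
    μ.real {ω | ∃ s ≤ n, x ≤ ∑ k ∈ Icc 1 s, Y k ω} ≤ exp (-x ^ 2 / (2 * (n * c))) := by
  by_cases hnc : (n : ℝ) * c = 0
  · simp [hnc]
  calc μ.real {ω | ∃ s ≤ n, x ≤ ∑ k ∈ Icc 1 s, Y k ω}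
      ≤ exp (-(x / (n * c)) * x + n * c * (x / (n * c)) ^ 2 / 2) :=
        measureReal_exists_sum_ge_le_exp_add hmeas hindep hsubG h0 n x (by positivity)
    _ = exp (-x ^ 2 / (2 * (n * c))) := by congr 1; field_simp; ring

lemma measureReal_exists_sqrt_mul_le_sum_le (hmeas : ∀ k, Measurable (Y k))
    (hindep : iIndepFun Y μ)
    (hsubG : ∀ k, HasSubgaussianMGF (Y k) c μ) (h0 : ∀ k, μ[Y k] = 0) {β : ℝ} (hβ : 1 < β)
    {a : ℝ} (ha : 0 ≤ a) (n : ℕ) :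
    μ.real {ω | ∃ s, 1 ≤ s ∧ s ≤ n ∧ √(a * s) ≤ ∑ k ∈ Icc 1 s, Y k ω}
      ≤ (log n / log β + 1) * exp (-a / (2 * c * β)) := by
  have hlogβ : 0 < log β := log_pos hβ
  set K := ⌊log n / log β⌋₊
  set block : ℕ → Set Ω := fun k =>
    {ω | ∃ s ≤ ⌊β ^ (k + 1)⌋₊, √(a * β ^ k) ≤ ∑ i ∈ Icc 1 s, Y i ω}
  have hcover : {ω | ∃ s, 1 ≤ s ∧ s ≤ n ∧ √(a * s) ≤ ∑ k ∈ Icc 1 s, Y k ω}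
      ⊆ ⋃ k ∈ range (K + 1), block k := by
    rintro ω ⟨s, hs1, hsn, hdev⟩
    obtain ⟨k, hks, hsk⟩ := exists_nat_pow_near (Nat.one_le_cast.2 hs1) hβ
    have hkK : k ≤ K := by
      refine Nat.le_floor ((le_div_iff₀ hlogβ).2 ?_)
      rw [← log_pow]
      exact log_le_log (by positivity) (hks.trans (Nat.cast_le.2 hsn))
    exact Set.mem_biUnion (mem_range_succ_iff.2 hkK) ⟨s, Nat.le_floor hsk.le,
      (sqrt_le_sqrt (mul_le_mul_of_nonneg_left hks ha)).trans hdev⟩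
  have hblock : ∀ k, μ.real (block k) ≤ exp (-a / (2 * c * β)) := by
    intro k
    refine (measureReal_exists_sum_ge_le hmeas hindep hsubG h0 _ (sqrt_nonneg _)).trans ?_
    have hm : (0 : ℝ) < ⌊β ^ (k + 1)⌋₊ := Nat.cast_pos.2 (Nat.floor_pos.2 (one_le_pow₀ hβ.le))
    have hmβ : (⌊β ^ (k + 1)⌋₊ : ℝ) ≤ β ^ (k + 1) := Nat.floor_le (by positivity)
    rw [exp_le_exp, sq_sqrt (by positivity), neg_div, neg_div, neg_le_neg_iff]
    rcases eq_zero_or_pos c with hc | hc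
    · simp [hc]
    calc a / (2 * c * β) = a * β ^ k / (2 * (β ^ (k + 1) * c)) := by
          field_simp; ring
      _ ≤ a * β ^ k / (2 * (⌊β ^ (k + 1)⌋₊ * c)) := by gcongr
  calc μ.real {ω | ∃ s, 1 ≤ s ∧ s ≤ n ∧ √(a * s) ≤ ∑ k ∈ Icc 1 s, Y k ω}
      ≤ ∑ k ∈ range (K + 1), μ.real (block k) :=
        (measureReal_mono hcover (measure_ne_top _ _)).trans (measureReal_biUnion_finset_le _ _)
    _ ≤ (K + 1) * exp (-a / (2 * c * β)) :=
        (sum_le_sum fun k _ => hblock k).trans_eq (by simp)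
    _ ≤ (log n / log β + 1) * exp (-a / (2 * c * β)) := by
        gcongr
        exact Nat.floor_le (div_nonneg (log_natCast_nonneg n) hlogβ.le)

lemma sqrt_mul_le_sub_of_div_add_sqrt_div_le {m L s p : ℝ} (hs : 0 < s)
    (h : m / s + √(L / s) ≤ p) : √(L * s) ≤ p * s - m := by
  have hsqrt : √(L * s) = √(L / s) * s := by
    rw [show L * s = L / s * s ^ 2 by field_simp, sqrt_mul' _ (sq_nonneg s), sqrt_sq hs.le]
  have := mul_le_mul_of_nonneg_right h hs.le
  rw [add_mul, div_mul_cancel₀ m hs.ne'] at this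
  linarith

lemma add_sqrt_div_le_of_sub_sqrt_div_le {m L s p Δ : ℝ} (hs : 0 < s) (hΔ : 0 < Δ)
    (hsΔ : 4 * L / Δ ^ 2 ≤ s) (h : m - √(L / s) ≤ p - Δ) : m + √(L / s) ≤ p := by
  have hr : √(L / s) ≤ Δ / 2 := by
    rw [← sqrt_sq (half_pos hΔ).le]
    refine sqrt_le_sqrt ((div_le_iff₀ hs).2 ?_)
    have := (div_le_iff₀ (by positivity)).1 hsΔ
    nlinarith
  linarith

theorem measure_exists_div_add_sqrt_le_le {X : ℕ → Ω → ℝ} {p : ℝ}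
    (hmeas : ∀ k, Measurable (X k)) (hindep : iIndepFun X μ)
    (hrange : ∀ k ω, X k ω ∈ Set.Icc (0 : ℝ) 1) (hmean : ∀ k, ∫ ω, X k ω ∂μ = p)
    {α : ℝ} (hα : 1 / 2 < α) (t : ℕ) :
    μ {ω | ∃ s : ℕ, 1 ≤ s ∧ s ≤ t ∧
        (∑ k ∈ Icc 1 s, X k ω) / s + √(α * log t / s) ≤ p}
      ≤ ENNReal.ofReal ((log t / log (α + 1 / 2) + 1) * (t : ℝ) ^ (-(2 * α) / (α + 1 / 2))) := by
  have hsubG : ∀ k, HasSubgaussianMGF (fun ω => p - X k ω) ((‖(1 : ℝ) - 0‖₊ / 2) ^ 2) μ :=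
    fun k => ((hasSubgaussianMGF_of_mem_Icc (hmeas k).aemeasurable
      (ae_of_all _ (hrange k))).neg).congr (ae_of_all _ fun ω => by simp [hmean k])
  have h0 : ∀ k, ∫ ω, (p - X k ω) ∂μ = 0 := fun k => by
    rw [integral_sub (integrable_const p)
      (Integrable.of_mem_Icc 0 1 (hmeas k).aemeasurable (ae_of_all _ (hrange k))), hmean k]
    simp
  rcases t.eq_zero_or_pos with rfl | ht
  · simp
  have hdev := measureReal_exists_sqrt_mul_le_sum_le (fun k => measurable_const.sub (hmeas k))
    (hindep.comp (fun _ x => p - x) fun _ => measurable_const.sub measurable_id) hsubG h0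
    (β := α + 1 / 2) (by linarith) (a := α * log t) (by positivity) t
  have hsub : {ω | ∃ s : ℕ, 1 ≤ s ∧ s ≤ t ∧ (∑ k ∈ Icc 1 s, X k ω) / s + √(α * log t / s) ≤ p}
      ⊆ {ω | ∃ s : ℕ, 1 ≤ s ∧ s ≤ t ∧ √(α * log t * s) ≤ ∑ k ∈ Icc 1 s, (p - X k ω)} := by
    rintro ω ⟨s, hs1, hst, h⟩
    refine ⟨s, hs1, hst, ?_⟩
    rw [sum_sub_distrib, sum_const, Nat.card_Icc, nsmul_eq_mul, Nat.add_sub_cancel,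
      mul_comm (s : ℝ) p]
    exact sqrt_mul_le_sub_of_div_add_sqrt_div_le (Nat.cast_pos.2 hs1) h
  have hexp : exp (-(α * log t) / (2 * ((‖(1 : ℝ) - 0‖₊ / 2) ^ 2 : ℝ≥0) * (α + 1 / 2)))
      = (t : ℝ) ^ (-(2 * α) / (α + 1 / 2)) := by
    rw [rpow_def_of_pos (Nat.cast_pos.2 ht)]
    norm_num
    field_simp
  calc _ ≤ _ := measure_mono hsub
    _ = ENNReal.ofReal (μ.real _) := (ofReal_measureReal (measure_ne_top _ _)).symm
    _ ≤ _ := ENNReal.ofReal_le_ofReal (hdev.trans_eq (by rw [hexp]))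
end

theorem stmt_11_general {Ω : Type*} [MeasurableSpace Ω] (μ : Measure Ω) [IsProbabilityMeasure μ]
    (X : ℕ → Ω → ℝ) (p : ℝ) (hp : 1/2 < p) (Δ : ℝ) (hΔ : Δ = p - 1/2)
    (hmeas : ∀ k, Measurable (X k))
    (hindep : iIndepFun X μ)
    (hrange : ∀ k ω, X k ω ∈ Set.Icc (0 : ℝ) 1)
    (hmean : ∀ k, ∫ ω, X k ω ∂μ = p)
    (α : ℝ) (hα : 1/2 < α) (t : ℕ) (ht : 2 ≤ t) :
    μ {ω | ∃ s : ℕ, 4 * α * Real.log t / Δ ^ 2 ≤ (s : ℝ) ∧ s ≤ t ∧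
        (∑ k ∈ Finset.Icc 1 s, X k ω) / (s : ℝ)
          - Real.sqrt (α * Real.log t / (s : ℝ)) ≤ 1/2}
      ≤ ENNReal.ofReal
          ((Real.log t / Real.log (α + 1/2) + 1) * (t : ℝ) ^ (-(2 * α) / (α + 1/2))) := by
  have hΔpos : 0 < Δ := by linarith
  have hlog : 0 < Real.log t := Real.log_pos (by exact_mod_cast ht)
  refine (measure_mono ?_).trans
    (measure_exists_div_add_sqrt_le_le hmeas hindep hrange hmean hα t)
  rintro ω ⟨s, hsΔ, hst, hlcb⟩
  have hs : (0 : ℝ) < s := lt_of_lt_of_le (by positivity) hsΔ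
  refine ⟨s, Nat.cast_pos.1 hs, hst, add_sqrt_div_le_of_sub_sqrt_div_le hs hΔpos ?_ ?_⟩
  · rwa [← mul_assoc]
  · rwa [hΔ, sub_sub_cancel]

/-- Combination of the deterministic implication in the proof of Lemma 2 with
the anytime UCB deviation inequality of Lemma 6: for i.i.d. `[0,1]`-valued
random variables with mean `p > 1/2` and gap `Δ = p − 1/2`, the probability
that the lower confidence bound is at most `1/2` at some sample size
`s ∈ [4α log t/Δ², t]` is at most `(log t / log(α+1/2) + 1) · t^{−2α/(α+1/2)}`. -/
theorem stmt_11 {Ω : Type*} [MeasurableSpace Ω] (μ : Measure Ω) [IsProbabilityMeasure μ]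
    (X : ℕ → Ω → ℝ) (p : ℝ) (hp : 1/2 < p) (Δ : ℝ) (hΔ : Δ = p - 1/2)
    (hmeas : ∀ k, Measurable (X k))
    (hindep : iIndepFun X μ)
    (hident : ∀ k, IdentDistrib (X k) (X 1) μ μ)
    (hrange : ∀ k ω, X k ω ∈ Set.Icc (0 : ℝ) 1)
    (hmean : ∀ k, ∫ ω, X k ω ∂μ = p)
    (α : ℝ) (hα : 1/2 < α) (t : ℕ) (ht : 2 ≤ t) :
    μ {ω | ∃ s : ℕ, 4 * α * Real.log t / Δ ^ 2 ≤ (s : ℝ) ∧ s ≤ t ∧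
        (∑ k ∈ Finset.Icc 1 s, X k ω) / (s : ℝ)
          - Real.sqrt (α * Real.log t / (s : ℝ)) ≤ 1/2}
      ≤ ENNReal.ofReal
          ((Real.log t / Real.log (α + 1/2) + 1) * (t : ℝ) ^ (-(2 * α) / (α + 1/2))) :=
  stmt_11_general μ X p hp Δ hΔ hmeas hindep hrange hmean α hα t ht
end
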